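/- arXiv:2504.06929 — 2 statements merged into one kernel-verified Lean document; each statement's English description precedes it below -/
import Mathlib

section
/- Let I be an l × (l+n) rational matrix and J an invertible l × l rational matrix with I Iᵀ = J Jᵀ, and suppose additionally that I applied to the all-ones vector 1_{l+n} equals J applied to the all-ones vector 1_l. Let K = 1_{l+n} ∈ Q^{l+n}. Then the orthogonal projection (with respect to the standard inner product) of K onto the row space of J^{-1}I has squared Euclidean norm equal to l, and consequently the orthogonal projection of K onto the kernel of I has squared norm l + n - l = n. -/
/-!
Writing `M = J⁻¹ I`, the hypothesis `I Iᵀ = J Jᵀ` gives `I Mᵀ = J`, hence `M Mᵀ = 1`: the rows of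
`M` are orthonormal, so `p = Mᵀ (M K)` is the orthogonal projection of `K` onto the row space of `M`
and `p ⬝ p = (M K) ⬝ (M K)`. The hypothesis `I 1 = J 1` says `M K = 1`, so `p ⬝ p = l`. Moreover
`I p = J M K = I K`, so `K - p ∈ ker I`, and Pythagoras gives `(K - p) ⬝ (K - p) = (l + n) - l`.
-/

open Matrix

namespace Matrix

variable {R m k : Type*} [CommRing R] [Fintype m] [Fintype k] [DecidableEq m]

theorem mul_transpose_inv_mul_of_mul_transpose_eq {I : Matrix m k R} {J : Matrix m m R}
    (hJ : IsUnit J.det) (h : I * Iᵀ = J * Jᵀ) : I * (J⁻¹ * I)ᵀ = J := by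
  rw [transpose_mul, transpose_nonsing_inv, ← Matrix.mul_assoc, h,
    mul_nonsing_inv_cancel_right _ _ (isUnit_det_transpose J hJ)]

theorem inv_mul_mul_transpose_inv_mul_eq_one {I : Matrix m k R} {J : Matrix m m R}
    (hJ : IsUnit J.det) (h : I * Iᵀ = J * Jᵀ) : J⁻¹ * I * (J⁻¹ * I)ᵀ = 1 := by
  rw [Matrix.mul_assoc, mul_transpose_inv_mul_of_mul_transpose_eq hJ h, nonsing_inv_mul J hJ]

theorem mulVec_transpose_mulVec_inv_mul {I : Matrix m k R} {J : Matrix m m R}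
    (hJ : IsUnit J.det) (h : I * Iᵀ = J * Jᵀ) (x : k → R) :
    I *ᵥ ((J⁻¹ * I)ᵀ *ᵥ ((J⁻¹ * I) *ᵥ x)) = I *ᵥ x := by
  rw [mulVec_mulVec, mulVec_mulVec, mul_transpose_inv_mul_of_mul_transpose_eq hJ h,
    mul_nonsing_inv_cancel_left _ _ hJ]

variable {M : Matrix m k R}

theorem transpose_mulVec_dotProduct_self (hM : M * Mᵀ = 1) (v : m → R) :
    (Mᵀ *ᵥ v) ⬝ᵥ (Mᵀ *ᵥ v) = v ⬝ᵥ v := by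
  rw [dotProduct_transpose_mulVec, mulVec_mulVec, hM, one_mulVec]

theorem sub_projection_dotProduct_self (hM : M * Mᵀ = 1) (x : k → R) :
    (x - Mᵀ *ᵥ (M *ᵥ x)) ⬝ᵥ (x - Mᵀ *ᵥ (M *ᵥ x)) =
      x ⬝ᵥ x - (Mᵀ *ᵥ (M *ᵥ x)) ⬝ᵥ (Mᵀ *ᵥ (M *ᵥ x)) := by
  have hxp : x ⬝ᵥ (Mᵀ *ᵥ (M *ᵥ x)) = (M *ᵥ x) ⬝ᵥ (M *ᵥ x) := dotProduct_transpose_mulVec ..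
  rw [dotProduct_sub, sub_dotProduct, sub_dotProduct, dotProduct_comm (Mᵀ *ᵥ (M *ᵥ x)) x, hxp,
    transpose_mulVec_dotProduct_self hM]
  ring

end Matrix

/-- With `I * Iᵀ = J * Jᵀ`, `J` invertible, and `I·1 = J·1`, let
`K = (1,…,1) ∈ ℚ^{l+n}`. Since the rows of `M = J⁻¹I` are orthonormal, the orthogonal
projection of `K` onto the row space of `M` is `Mᵀ (M K)`; its squared Euclidean norm
equals `l`, and the complementary projection `K - Mᵀ(M K)` lies in `ker I` and has
squared norm `n`. -/
theorem stmt7 (l n : ℕ)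
    (I : Matrix (Fin l) (Fin (l + n)) ℚ) (J : Matrix (Fin l) (Fin l) ℚ)
    (hJ : IsUnit J.det) (h : I * Iᵀ = J * Jᵀ)
    (h1 : I.mulVec (fun _ => 1) = J.mulVec (fun _ => 1))
    (K : Fin (l + n) → ℚ) (hK : K = fun _ => 1)
    (proj : Fin (l + n) → ℚ)
    (hproj : proj = (J⁻¹ * I)ᵀ.mulVec ((J⁻¹ * I).mulVec K)) :
    proj ⬝ᵥ proj = l ∧
    I.mulVec (K - proj) = 0 ∧
    (K - proj) ⬝ᵥ (K - proj) = n := by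
  have hMM := inv_mul_mul_transpose_inv_mul_eq_one hJ h
  have hMK : (J⁻¹ * I) *ᵥ K = 1 := by
    rw [← mulVec_mulVec, hK, h1, mulVec_mulVec, nonsing_inv_mul J hJ, one_mulVec]; rfl
  have hpp : proj ⬝ᵥ proj = l := by
    rw [hproj, transpose_mulVec_dotProduct_self hMM, hMK, one_dotProduct_one, Fintype.card_fin]
  refine ⟨hpp, ?_, ?_⟩
  · rw [mulVec_sub, hproj, mulVec_transpose_mulVec_inv_mul hJ h, sub_self]
  · rw [hproj, sub_projection_dotProduct_self hMM, ← hproj, hpp, hK]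
    change (1 : Fin (l + n) → ℚ) ⬝ᵥ 1 - l = n
    rw [one_dotProduct_one, Fintype.card_fin]
    push_cast
    ring
end

section
/- Consider a finite set of points and a family of finite subsets ('curves') where certain curves C (the 'cusps' C_i^j, for vertices i on a chain with the partial order of the chain) are equipped with a distinguished element X(C) ∈ C counted with multiplicity 2, and curve C is viewed as the multiset C with X(C) doubled, with intersection multiplicity i(C,D) = Σ_p m_C(p)·m_D(p). Suppose that for i ≤ a the intersection multiplicity i(C_i^j, C_a^b) equals 6 + min(i,a), and that |C_i^j| = 5 + i counted with multiplicity. Then: if X(C_i^j) ≠ X(C_a^b) we have C_i^j ⊆ C_a^b as sets, and if X(C_i^j) = X(C_a^b) then there is exactly one point p ∈ C_i^j with p ∉ C_a^b. -/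
/-- cusp lemma: Cusp curves are pairs `(S, x)` with double point `x ∈ S`,
multiplicity `2` at `x` and `1` on `S \ {x}`, total multiplicity `|S| + 1 = 5 + i` for a
curve at index `i`, and intersection pairing `∑ p, m₁ p * m₂ p = 6 + min i a` for curves
at indices `i ≤ a`. Then: if the double points differ, `S₁ ⊆ S₂`; if they coincide,
there is exactly one point of `S₁` missing from `S₂`. -/
theorem stmt11 {V : Type} [DecidableEq V]
    (i a : ℕ) (hia : i ≤ a)
    (S₁ S₂ : Finset V) (x₁ x₂ : V) (hx₁ : x₁ ∈ S₁) (hx₂ : x₂ ∈ S₂)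
    (m₁ m₂ : V → ℕ)
    (hm₁ : ∀ p, m₁ p = if p = x₁ then 2 else if p ∈ S₁ then 1 else 0)
    (hm₂ : ∀ p, m₂ p = if p = x₂ then 2 else if p ∈ S₂ then 1 else 0)
    (hc₁ : S₁.card + 1 = 5 + i) (hc₂ : S₂.card + 1 = 5 + a)
    (hpair : ∑ p ∈ S₁ ∪ S₂, m₁ p * m₂ p = 6 + min i a) :
    (x₁ ≠ x₂ → S₁ ⊆ S₂) ∧
    (x₁ = x₂ → ∃! p, p ∈ S₁ ∧ p ∉ S₂) := by
  have hmin : min i a = i := min_eq_left hia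
  set T := S₁ ∩ S₂ with hT
  -- reduce the sum to T
  have hsum1 : ∑ p ∈ S₁ ∪ S₂, m₁ p * m₂ p = ∑ p ∈ T, m₁ p * m₂ p := by
    refine (Finset.sum_subset (Finset.inter_subset_union) ?_).symm
    intro p hpu hpT
    rcases Finset.mem_union.mp hpu with h1 | h2
    · have h2 : p ∉ S₂ := fun h => hpT (Finset.mem_inter.mpr ⟨h1, h⟩)
      have : m₂ p = 0 := by
        rw [hm₂]
        have : p ≠ x₂ := fun h => h2 (h ▸ hx₂)
        simp [this, h2]
      simp [this]
    · by_cases h1 : p ∈ S₁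
      · exact absurd (Finset.mem_inter.mpr ⟨h1, h2⟩) hpT
      · have : m₁ p = 0 := by
          rw [hm₁]
          have : p ≠ x₁ := fun h => h1 (h ▸ hx₁)
          simp [this, h1]
        simp [this]
  -- compute the sum over T
  have hsum2 : ∑ p ∈ T, m₁ p * m₂ p =
      T.card + (if x₁ ∈ T then 1 else 0) + (if x₂ ∈ T then 1 else 0)
        + (if x₁ ∈ T then (if x₁ = x₂ then 1 else 0) else 0) := by
    have hterm : ∀ p ∈ T, m₁ p * m₂ p =
        1 + (if p = x₁ then 1 else 0) + (if p = x₂ then 1 else 0)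
          + (if p = x₁ then (if p = x₂ then 1 else 0) else 0) := by
      intro p hp
      have hp1 : p ∈ S₁ := (Finset.mem_inter.mp hp).1
      have hp2 : p ∈ S₂ := (Finset.mem_inter.mp hp).2
      rw [hm₁, hm₂]
      split_ifs <;> simp_all
    rw [Finset.sum_congr rfl hterm]
    rw [Finset.sum_add_distrib, Finset.sum_add_distrib, Finset.sum_add_distrib]
    rw [Finset.sum_const, smul_eq_mul, mul_one]
    rw [Finset.sum_ite_eq' T x₁ (fun _ => (1:ℕ)),
        Finset.sum_ite_eq' T x₂ (fun _ => (1:ℕ)),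
        Finset.sum_ite_eq' T x₁ (fun p => if p = x₂ then 1 else 0)]
  have hcardT : T.card + (if x₁ ∈ T then 1 else 0) + (if x₂ ∈ T then 1 else 0)
      + (if x₁ ∈ T then (if x₁ = x₂ then 1 else 0) else 0) = 6 + i := by
    rw [← hsum2, ← hsum1, hpair, hmin]
  have hTsub : T ⊆ S₁ := by rw [hT]; exact Finset.inter_subset_left
  have hTle : T.card ≤ S₁.card := Finset.card_le_card hTsub
  constructor
  · intro hne
    have h1 : (if x₁ ∈ T then (1:ℕ) else 0) ≤ 1 := by split_ifs <;> omega
    have h2 : (if x₂ ∈ T then (1:ℕ) else 0) ≤ 1 := by split_ifs <;> omega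
    have h3 : (if x₁ ∈ T then (if x₁ = x₂ then (1:ℕ) else 0) else 0) = 0 := by
      simp [hne]
    have hTcard : T.card = S₁.card := by omega
    have : T = S₁ := Finset.eq_of_subset_of_card_le hTsub (le_of_eq hTcard.symm)
    intro p hp
    exact (Finset.mem_inter.mp (this ▸ hp)).2
  · intro heq
    have hx1T : x₁ ∈ T := Finset.mem_inter.mpr ⟨hx₁, heq ▸ hx₂⟩
    have hx2T : x₂ ∈ T := heq ▸ hx1T
    rw [if_pos hx1T, if_pos hx2T, if_pos hx1T, if_pos heq] at hcardT
    have hTcard : T.card = 3 + i := by omega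
    have hsd : (S₁ \ S₂).card = 1 := by
      have h := Finset.card_inter_add_card_sdiff S₁ S₂
      rw [← hT] at h
      omega
    obtain ⟨c, hc⟩ := Finset.card_eq_one.mp hsd
    refine ⟨c, ?_, ?_⟩
    · have : c ∈ S₁ \ S₂ := hc ▸ Finset.mem_singleton_self c
      exact ⟨(Finset.mem_sdiff.mp this).1, (Finset.mem_sdiff.mp this).2⟩
    · intro p hp
      have : p ∈ S₁ \ S₂ := Finset.mem_sdiff.mpr hp
      rw [hc] at this
      exact Finset.mem_singleton.mp this
end
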